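/- If there exist an OA(2, k, k) and a resolvable Steiner system S(2, k, n), then there exists a mixed Steiner system MS(2, k, Z_2^{(k−1)n} × Z_{n+1}). -/

import Mathlib

/-!
Identify a word `x` of `Z₂^{(k-1)n} × Z_{n+1}` with its set of *cells*: the positions of its binary
support together with the value of its last coordinate when that is nonzero. Weights become
cardinalities, a weight-2 word lies within distance `k - 2` of a weight-`k` word exactly when its
cells are among those of the latter, and weight-`k` words sharing at most one cell are at distance
at least `2k - 3`. So it suffices to find `k`-sets of cells, each with at most one last-coordinate
cell, such that every pair of cells not both of the last coordinate lies in exactly one of them.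

Label the cells by `Fin k × Fin n`, a distinguished symbol `s₀` standing for the last coordinate.
The blocks are the `n` columns `Fin k × {v}` together with, for every block `b = {b₀, …, b_{k-1}}`
of the Steiner system and every row `r` of the orthogonal array `A` except one normalised to be
constantly `s₀`, the transversal `{(A r j, b_j)}`: two cells over distinct points lie in a unique
Steiner block and then agree with a unique row.
-/

open Finset

namespace MixedSteiner

lemma not_isRight_and_isRight {α β : Type*} {u : Finset (α ⊕ β)} (hu : #u.toRight ≤ 1)
    {a b : α ⊕ β} (ha : a ∈ u) (hb : b ∈ u) (hab : a ≠ b) :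
    ¬(a.isRight ∧ b.isRight) := by
  rintro ⟨ha', hb'⟩
  obtain ⟨a, rfl⟩ := Sum.isRight_iff.mp ha'
  obtain ⟨b, rfl⟩ := Sum.isRight_iff.mp hb'
  exact hab (congrArg _ (card_le_one.mp hu a (mem_toRight.mpr ha) b (mem_toRight.mpr hb)))

lemma card_subtype_singleton {α : Type*} (p : α → Prop) [DecidablePred p] (a : α) :
    #(({a} : Finset α).subtype p) = if p a then 1 else 0 := by
  rw [card_subtype, filter_singleton]; split_ifs <;> rfl

section Words

variable {ι M : Type*} [Fintype ι] [Zero M] [DecidableEq M]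

def mixedWeight (x : (ι → ZMod 2) × M) : ℕ :=
  hammingNorm x.1 + if x.2 = 0 then 0 else 1

def mixedDist (x y : (ι → ZMod 2) × M) : ℕ :=
  hammingDist x.1 y.1 + if x.2 = y.2 then 0 else 1

def IsMixedSteinerSystem (k : ℕ) (C : Set ((ι → ZMod 2) × M)) : Prop :=
  (∀ c ∈ C, mixedWeight c = k) ∧
  (∀ x, mixedWeight x = 2 → ∃! c, c ∈ C ∧ mixedDist x c = k - 2) ∧
  (∀ c₁ ∈ C, ∀ c₂ ∈ C, c₁ ≠ c₂ → 2 * (k - 2) + 1 ≤ mixedDist c₁ c₂)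

def cells (x : (ι → ZMod 2) × M) : Finset (ι ⊕ {z : M // z ≠ 0}) :=
  ({i | x.1 i ≠ 0} : Finset ι).disjSum (({x.2} : Finset M).subtype (· ≠ 0))

lemma card_cells (x : (ι → ZMod 2) × M) : #(cells x) = mixedWeight x := by
  rw [cells, card_disjSum, card_subtype_singleton, ite_not, mixedWeight, hammingNorm]

lemma card_toRight_cells_le (x : (ι → ZMod 2) × M) : #(cells x).toRight ≤ 1 := by
  rw [cells, toRight_disjSum, card_subtype_singleton]; split_ifs <;> simp

lemma cells_injective : Function.Injective (cells : (ι → ZMod 2) × M → _) := by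
  intro x y h
  obtain ⟨h₁, h₂⟩ := Injective2_disjSum h
  have bin : ∀ a b : ZMod 2, (a ≠ 0 ↔ b ≠ 0) → a = b := by decide
  refine Prod.ext (funext fun i => bin _ _ (by simpa using congrArg (i ∈ ·) h₁)) ?_
  have h₂' := congrArg (·.map (Function.Embedding.subtype _)) h₂
  simp only [subtype_map, filter_singleton] at h₂'
  split_ifs at h₂' <;> simp_all

lemma hammingDist_add_two_mul_card (f g : ι → ZMod 2) :
    hammingDist f g + 2 * #{i | f i ≠ 0 ∧ g i ≠ 0} = hammingNorm f + hammingNorm g := by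
  simp only [hammingDist, hammingNorm, card_filter, mul_sum, ← sum_add_distrib]
  have key : ∀ a b : ZMod 2, ((if a ≠ b then 1 else 0) + 2 * if a ≠ 0 ∧ b ≠ 0 then 1 else 0) =
      (if a ≠ 0 then 1 else 0) + if b ≠ 0 then 1 else 0 := by decide
  exact sum_congr rfl fun i _ => key (f i) (g i)

variable [DecidableEq ι]

/-- Two distinct nonzero last coordinates are one position apart but two cells apart. -/
lemma mixedDist_add_two_mul_card_inter (x y : (ι → ZMod 2) × M) :
    mixedDist x y + 2 * #(cells x ∩ cells y) + (if x.2 ≠ 0 ∧ y.2 ≠ 0 ∧ x.2 ≠ y.2 then 1 else 0) =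
      #(cells x) + #(cells y) := by
  have hbin := hammingDist_add_two_mul_card x.1 y.1
  have hz : (if x.2 = y.2 then 0 else 1) + 2 * #((({x.2} : Finset M).subtype (· ≠ 0)) ∩
      ({y.2} : Finset M).subtype (· ≠ 0)) + (if x.2 ≠ 0 ∧ y.2 ≠ 0 ∧ x.2 ≠ y.2 then 1 else 0) =
      (if x.2 = 0 then 0 else 1) + (if y.2 = 0 then 0 else 1) := by
    by_cases hx : x.2 = 0 <;> by_cases hy : y.2 = 0 <;> by_cases hxy : x.2 = y.2 <;>
      simp_all [Finset.ext_iff, card_subtype, filter_singleton]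
  rw [← card_toLeft_add_card_toRight, toLeft_inter, toRight_inter, card_cells, card_cells]
  simp only [mixedDist, mixedWeight, cells, toLeft_disjSum, toRight_disjSum, ← filter_and]
  omega

lemma exists_cells_eq {S : Finset (ι ⊕ {z : M // z ≠ 0})} (hS : #S.toRight ≤ 1) :
    ∃ x, cells x = S := by
  obtain ⟨z, hz⟩ : ∃ z : M, ({z} : Finset M).subtype (· ≠ 0) = S.toRight := by
    rcases S.toRight.eq_empty_or_nonempty with h | ⟨w, hw⟩
    · exact ⟨0, by ext u; simpa [h] using u.2⟩
    · refine ⟨w, ?_⟩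
      ext u
      simp only [mem_subtype, mem_singleton, ← Subtype.ext_iff]
      exact ⟨fun h => h ▸ hw, fun hu => card_le_one.mp hS u hu w hw⟩
  refine ⟨(fun i => if i ∈ S.toLeft then 1 else 0, z), ?_⟩
  rw [cells, disjSum_eq_iff]
  exact ⟨by ext i; simp, hz⟩

lemma mixedDist_eq_sub_two_iff {k : ℕ} {x c : (ι → ZMod 2) × M} (hx : #(cells x) = 2)
    (hc : #(cells c) = k) : mixedDist x c = k - 2 ↔ cells x ⊆ cells c := by
  have key := mixedDist_add_two_mul_card_inter x c
  have hI : #(cells x ∩ cells c) ≤ 2 := hx ▸ card_le_card inter_subset_left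
  have hI' : #(cells x ∩ cells c) ≤ k := hc ▸ card_le_card inter_subset_right
  constructor
  · intro hd
    have he : (if x.2 ≠ 0 ∧ c.2 ≠ 0 ∧ x.2 ≠ c.2 then 1 else 0) ≤ mixedDist x c := by
      split_ifs with h
      · simp [mixedDist, h.2.2]
      · exact Nat.zero_le _
    have he' : (if x.2 ≠ 0 ∧ c.2 ≠ 0 ∧ x.2 ≠ c.2 then 1 else 0) ≤ 1 := by split_ifs <;> simp
    have : #(cells x ∩ cells c) = #(cells x) := by omega
    exact inter_eq_left.mp (eq_of_subset_of_card_le inter_subset_left this.ge)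
  · intro hsub
    have hsame : ¬(x.2 ≠ 0 ∧ c.2 ≠ 0 ∧ x.2 ≠ c.2) := by
      rintro ⟨hx0, -, hne⟩
      have := hsub (inr_mem_disjSum.mpr (by simp) : Sum.inr ⟨x.2, hx0⟩ ∈ cells x)
      simp [cells] at this
      exact hne this
    rw [inter_eq_left.mpr hsub, if_neg hsame] at key
    omega

theorem isMixedSteinerSystem_preimage_cells {k : ℕ} (hk : 2 ≤ k)
    (𝓑 : Set (Finset (ι ⊕ {z : M // z ≠ 0}))) (hcard : ∀ G ∈ 𝓑, #G = k)
    (hright : ∀ G ∈ 𝓑, #G.toRight ≤ 1)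
    (hpair : ∀ a b, a ≠ b → ¬(a.isRight ∧ b.isRight) → ∃! G, G ∈ 𝓑 ∧ a ∈ G ∧ b ∈ G) :
    IsMixedSteinerSystem k (cells ⁻¹' 𝓑) := by
  refine ⟨fun c hc => card_cells c ▸ hcard _ hc, fun x hx => ?_, fun c₁ hc₁ c₂ hc₂ hne => ?_⟩
  · rw [← card_cells] at hx
    obtain ⟨a, b, hab, hxab⟩ := card_eq_two.mp hx
    have hsub : ∀ c, cells x ⊆ cells c ↔ a ∈ cells c ∧ b ∈ cells c := by
      simp [hxab, insert_subset_iff]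
    have hnr := not_isRight_and_isRight (card_toRight_cells_le x)
      (hxab ▸ mem_insert_self a {b}) (hxab ▸ mem_insert_of_mem (mem_singleton_self b)) hab
    obtain ⟨G, ⟨hG, haG, hbG⟩, hGu⟩ := hpair a b hab hnr
    obtain ⟨c, rfl⟩ := exists_cells_eq (hright _ hG)
    refine ⟨c, ⟨hG, (mixedDist_eq_sub_two_iff hx (hcard _ hG)).mpr ((hsub c).mpr ⟨haG, hbG⟩)⟩,
      fun c' ⟨hc', hd⟩ => cells_injective (hGu _ ⟨hc', (hsub c').mp ?_⟩)⟩
    exact (mixedDist_eq_sub_two_iff hx (hcard _ hc')).mp hd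
  · have hI : #(cells c₁ ∩ cells c₂) ≤ 1 := by
      by_contra! h
      obtain ⟨a, ha, b, hb, hab⟩ := one_lt_card.mp h
      rw [mem_inter] at ha hb
      obtain ⟨G, -, hGu⟩ :=
        hpair a b hab (not_isRight_and_isRight (hright _ hc₁) ha.1 hb.1 hab)
      exact hne (cells_injective ((hGu _ ⟨hc₁, ha.1, hb.1⟩).trans (hGu _ ⟨hc₂, ha.2, hb.2⟩).symm))
    have key := mixedDist_add_two_mul_card_inter c₁ c₂
    have he : (if c₁.2 ≠ 0 ∧ c₂.2 ≠ 0 ∧ c₁.2 ≠ c₂.2 then 1 else 0) ≤ 1 := by split_ifs <;> simp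
    rw [hcard _ hc₁, hcard _ hc₂] at key
    omega

theorem isMixedSteinerSystem_preimage_map_cells {α : Type*} {k : ℕ} (hk : 2 ≤ k)
    (E : α ≃ ι ⊕ {z : M // z ≠ 0}) (𝓕 : Set (Finset α)) (hcard : ∀ F ∈ 𝓕, #F = k)
    (hright : ∀ F ∈ 𝓕, ∀ c ∈ F, ∀ c' ∈ F, (E c).isRight → (E c').isRight → c = c')
    (hpair : ∀ c c', c ≠ c' → ¬((E c).isRight ∧ (E c').isRight) →
      ∃! F, F ∈ 𝓕 ∧ c ∈ F ∧ c' ∈ F) :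
    IsMixedSteinerSystem k (cells ⁻¹' ((·.map E.toEmbedding) '' 𝓕)) := by
  refine isMixedSteinerSystem_preimage_cells hk _ ?_ ?_ ?_
  · rintro _ ⟨F, hF, rfl⟩
    rw [card_map, hcard F hF]
  · rintro _ ⟨F, hF, rfl⟩
    refine card_le_one.2 fun a ha b hb => ?_
    rw [mem_toRight, mem_map_equiv] at ha hb
    simpa using hright F hF _ ha _ hb (by simp) (by simp)
  · intro a b hab hnr
    obtain ⟨F, ⟨hF, ha, hb⟩, hu⟩ :=
      hpair (E.symm a) (E.symm b) (E.symm.injective.ne hab) (by simpa using hnr)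
    refine ⟨F.map E.toEmbedding, ⟨⟨F, hF, rfl⟩, mem_map_equiv.2 ha, mem_map_equiv.2 hb⟩, ?_⟩
    rintro _ ⟨⟨F', hF', rfl⟩, ha', hb'⟩
    rw [hu F' ⟨hF', mem_map_equiv.1 ha', mem_map_equiv.1 hb'⟩]

end Words

section OrthogonalArray

variable {R J S : Type*}

def IsOrthogonalArray (A : R → J → S) : Prop :=
  ∀ j₁ j₂, j₁ ≠ j₂ → ∀ a b, ∃! r, A r j₁ = a ∧ A r j₂ = b

namespace IsOrthogonalArray

variable {A : R → J → S}

lemma eq_of_eq_of_eq (hA : IsOrthogonalArray A) {j₁ j₂ : J} (hj : j₁ ≠ j₂) {r r' : R} (h₁ : A r j₁ = A r' j₁)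
    (h₂ : A r j₂ = A r' j₂) : r = r' :=
  (hA j₁ j₂ hj _ _).unique ⟨h₁, h₂⟩ ⟨rfl, rfl⟩

lemma comp_perm (hA : IsOrthogonalArray A) (σ : J → Equiv.Perm S) : IsOrthogonalArray fun r j => σ j (A r j) := by
  intro j₁ j₂ hj a b
  simpa only [Equiv.eq_symm_apply] using hA j₁ j₂ hj ((σ j₁).symm a) ((σ j₂).symm b)

lemma exists_const_row [DecidableEq S] (hA : IsOrthogonalArray A) (r₀ : R) (s₀ : S) :
    ∃ A' : R → J → S, IsOrthogonalArray A' ∧ ∀ j, A' r₀ j = s₀ :=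
  ⟨_, hA.comp_perm fun j => Equiv.swap (A r₀ j) s₀, fun _ => Equiv.swap_apply_left _ _⟩

end IsOrthogonalArray

end OrthogonalArray

section CellBlocks

variable {R J S V : Type*} [Fintype J] (A : R → J → S) (r₀ : R) (L : Set (J ↪ V))

def lineBlock (r : R) (ℓ : J ↪ V) : Finset (S × V) :=
  univ.map ⟨fun j => (A r j, ℓ j), fun _ _ h => ℓ.injective (congrArg Prod.snd h)⟩

lemma mem_lineBlock {A : R → J → S} {r : R} {ℓ : J ↪ V} {c : S × V} :
    c ∈ lineBlock A r ℓ ↔ ∃ j, A r j = c.1 ∧ ℓ j = c.2 := by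
  simp only [lineBlock, mem_map, mem_univ, true_and, Prod.ext_iff]
  exact Iff.rfl

variable [Fintype S]

def cellBlocks : Set (Finset (S × V)) :=
  {F | ∃ v, F = univ ×ˢ {v}} ∪ {F | ∃ ℓ ∈ L, ∃ r ≠ r₀, F = lineBlock A r ℓ}

variable {A r₀ L}

lemma card_of_mem_cellBlocks (hJS : Fintype.card J = Fintype.card S) {F : Finset (S × V)}
    (hF : F ∈ cellBlocks A r₀ L) : #F = Fintype.card S := by
  rcases hF with ⟨v, rfl⟩ | ⟨ℓ, -, r, -, rfl⟩
  · simp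
  · simp [lineBlock, hJS]

lemma eq_of_mem_cellBlocks_of_fst_eq (hA : IsOrthogonalArray A) {s₀ : S} (hA₀ : ∀ j, A r₀ j = s₀)
    {F : Finset (S × V)} (hF : F ∈ cellBlocks A r₀ L) {c c' : S × V} (hc : c ∈ F) (hc' : c' ∈ F)
    (h : c.1 = s₀) (h' : c'.1 = s₀) : c = c' := by
  rcases hF with ⟨v, rfl⟩ | ⟨ℓ, -, r, hr, rfl⟩
  · simp only [mem_product, mem_univ, mem_singleton, true_and] at hc hc'
    exact Prod.ext (h.trans h'.symm) (hc.trans hc'.symm)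
  · obtain ⟨j, hj, hj'⟩ := mem_lineBlock.1 hc
    obtain ⟨i, hi, hi'⟩ := mem_lineBlock.1 hc'
    rcases eq_or_ne j i with rfl | hji
    · exact Prod.ext (hj.symm.trans hi) (hj'.symm.trans hi')
    · exact absurd (hA.eq_of_eq_of_eq hji (by rw [hj, h, hA₀]) (by rw [hi, h', hA₀])) hr

lemma existsUnique_mem_cellBlocks_of_snd_eq {c c' : S × V} (hne : c ≠ c') (h : c.2 = c'.2) :
    ∃! F, F ∈ cellBlocks A r₀ L ∧ c ∈ F ∧ c' ∈ F := by
  refine ⟨univ ×ˢ {c.2}, ⟨Or.inl ⟨_, rfl⟩, by simp, by simp [h]⟩, ?_⟩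
  rintro F ⟨⟨v, rfl⟩ | ⟨ℓ, -, r, -, rfl⟩, hc, hc'⟩
  · simp only [mem_product, mem_univ, mem_singleton, true_and] at hc
    rw [hc]
  · obtain ⟨j, hj, hj'⟩ := mem_lineBlock.1 hc
    obtain ⟨i, hi, hi'⟩ := mem_lineBlock.1 hc'
    obtain rfl : j = i := ℓ.injective (by rw [hj', hi', h])
    exact absurd (Prod.ext (hj.symm.trans hi) (hj'.symm.trans hi')) hne

lemma existsUnique_mem_cellBlocks_of_snd_ne (hA : IsOrthogonalArray A) {s₀ : S}
    (hA₀ : ∀ j, A r₀ j = s₀)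
    (hL : ∀ u v, u ≠ v → ∃! ℓ, ℓ ∈ L ∧ u ∈ Set.range ℓ ∧ v ∈ Set.range ℓ)
    {c c' : S × V} (h : c.2 ≠ c'.2) (hs : ¬(c.1 = s₀ ∧ c'.1 = s₀)) :
    ∃! F, F ∈ cellBlocks A r₀ L ∧ c ∈ F ∧ c' ∈ F := by
  obtain ⟨ℓ, ⟨hℓ, ⟨j, hj⟩, ⟨j', hj'⟩⟩, hℓu⟩ := hL c.2 c'.2 h
  have hjj : j ≠ j' := by rintro rfl; exact h (hj.symm.trans hj')
  obtain ⟨r, ⟨hr, hr'⟩, hru⟩ := hA j j' hjj c.1 c'.1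
  have hr₀ : r ≠ r₀ := by
    rintro rfl
    exact hs ⟨hr.symm.trans (hA₀ j), hr'.symm.trans (hA₀ j')⟩
  refine ⟨lineBlock A r ℓ, ⟨Or.inr ⟨ℓ, hℓ, r, hr₀, rfl⟩, mem_lineBlock.2 ⟨j, hr, hj⟩,
    mem_lineBlock.2 ⟨j', hr', hj'⟩⟩, ?_⟩
  rintro F ⟨⟨v, rfl⟩ | ⟨ℓ', hℓ', r', -, rfl⟩, hc, hc'⟩
  · simp only [mem_product, mem_univ, mem_singleton, true_and] at hc hc'
    exact absurd (hc.trans hc'.symm) h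
  · obtain ⟨i, hi, hi'⟩ := mem_lineBlock.1 hc
    obtain ⟨i', hi₂, hi₂'⟩ := mem_lineBlock.1 hc'
    obtain rfl := hℓu ℓ' ⟨hℓ', ⟨i, hi'⟩, ⟨i', hi₂'⟩⟩
    obtain rfl : i = j := ℓ'.injective (hi'.trans hj.symm)
    obtain rfl : i' = j' := ℓ'.injective (hi₂'.trans hj'.symm)
    rw [hru r' ⟨hi, hi₂⟩]

end CellBlocks

def cellEquiv {S V ι N : Type*} [DecidableEq S] (s₀ : S) (eι : ι ≃ {s // s ≠ s₀} × V)
    (eN : N ≃ V) : S × V ≃ ι ⊕ N where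
  toFun c := if h : c.1 = s₀ then .inr (eN.symm c.2) else .inl (eι.symm (⟨c.1, h⟩, c.2))
  invFun := Sum.elim (fun i => ((eι i).1, (eι i).2)) fun z => (s₀, eN z)
  left_inv c := by
    by_cases h : c.1 = s₀
    · simp [h, Prod.ext_iff]
    · simp [h]
  right_inv := by
    rintro (i | z)
    · simp [(eι i).1.2]
    · simp

lemma isRight_cellEquiv {S V ι N : Type*} [DecidableEq S] {s₀ : S} {eι : ι ≃ {s // s ≠ s₀} × V}
    {eN : N ≃ V} {c : S × V} : (cellEquiv s₀ eι eN c).isRight ↔ c.1 = s₀ := by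
  by_cases h : c.1 = s₀ <;> simp [cellEquiv, h]

lemma exists_labelling {V : Type*} {k : ℕ} {B : Set (Finset V)} (hBk : ∀ b ∈ B, #b = k)
    (hB₂ : ∀ s : Finset V, #s = 2 → ∃! b, b ∈ B ∧ s ⊆ b) :
    ∃ L : Set (Fin k ↪ V), ∀ u v, u ≠ v → ∃! ℓ, ℓ ∈ L ∧ u ∈ Set.range ℓ ∧ v ∈ Set.range ℓ := by
  classical
  have : ∀ b ∈ B, ∃ ℓ : Fin k ↪ V, Set.range ℓ = b := fun b hb =>
    ⟨(equivFinOfCardEq (hBk b hb)).symm.toEmbedding.trans (Function.Embedding.subtype _), by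
      rw [Function.Embedding.coe_trans, Set.range_comp]; simp⟩
  choose ℓ hℓ using this
  refine ⟨{m | ∃ b hb, ℓ b hb = m}, fun u v huv => ?_⟩
  obtain ⟨b, ⟨hb, hub⟩, hbu⟩ := hB₂ {u, v} (card_pair huv)
  refine ⟨ℓ b hb, ⟨⟨b, hb, rfl⟩, ?_, ?_⟩, ?_⟩
  · rw [hℓ]; exact hub (by simp)
  · rw [hℓ]; exact hub (by simp)
  · rintro _ ⟨⟨b', hb', rfl⟩, hu, hv⟩
    rw [hℓ] at hu hv
    obtain rfl := hbu b' ⟨hb', by simpa [insert_subset_iff] using ⟨hu, hv⟩⟩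
    rfl

theorem exists_isMixedSteinerSystem {ι M V R : Type*} [Fintype ι] [DecidableEq ι] [Fintype M]
    [Zero M] [DecidableEq M] [Fintype V] {k : ℕ} (hk : 2 ≤ k)
    (hι : Fintype.card ι = (k - 1) * Fintype.card V) (hM : Fintype.card M = Fintype.card V + 1)
    {A : R → Fin k → Fin k} (hA : IsOrthogonalArray A) {L : Set (Fin k ↪ V)}
    (hL : ∀ u v, u ≠ v → ∃! ℓ, ℓ ∈ L ∧ u ∈ Set.range ℓ ∧ v ∈ Set.range ℓ) :
    ∃ C : Set ((ι → ZMod 2) × M), IsMixedSteinerSystem k C := by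
  let s₀ : Fin k := ⟨0, by omega⟩
  obtain ⟨r₀, -⟩ := hA s₀ ⟨1, hk⟩ (by simp [s₀, Fin.ext_iff]) s₀ s₀
  obtain ⟨A, hA, hA₀⟩ := hA.exists_const_row r₀ s₀
  let eι : ι ≃ {s // s ≠ s₀} × V := Fintype.equivOfCardEq (by simp [hι, Fintype.card_subtype_compl])
  let eN : {z : M // z ≠ 0} ≃ V := Fintype.equivOfCardEq (by simp [hM, Fintype.card_subtype_compl])
  refine ⟨_, isMixedSteinerSystem_preimage_map_cells hk (cellEquiv s₀ eι eN) (cellBlocks A r₀ L)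
    (fun F hF => by simpa using card_of_mem_cellBlocks rfl hF) ?_ ?_⟩
  · simp only [isRight_cellEquiv]
    exact fun F hF c hc c' hc' => eq_of_mem_cellBlocks_of_fst_eq hA hA₀ hF hc hc'
  · simp only [isRight_cellEquiv]
    intro c c' hne hs
    rcases eq_or_ne c.2 c'.2 with h | h
    · exact existsUnique_mem_cellBlocks_of_snd_eq hne h
    · exact existsUnique_mem_cellBlocks_of_snd_ne hA hA₀ hL h hs

end MixedSteiner

/-- If there exist an `OA(2, k, k)` and a resolvable Steiner system `S(2, k, n)`, then
there exists a mixed Steiner system `MS(2, k, Z₂^{(k-1)n} × Z_{n+1})`: a set of weight-`k`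
words over `Z₂^{(k-1)n} × Z_{n+1}` such that every weight-2 word is within Hamming
distance `k - 2` of exactly one codeword and the minimum Hamming distance is at
least `2(k-2)+1`. -/
theorem stmt15 (n k : ℕ) (hk : 2 ≤ k)
    (hOA : ∃ A : Fin (k ^ 2) → Fin k → Fin k,
      ∀ j₁ j₂ : Fin k, j₁ ≠ j₂ → ∀ a b : Fin k, ∃! r, A r j₁ = a ∧ A r j₂ = b)
    (hRes : ∃ (B : Finset (Finset (Fin n))) (P : Finset (Finset (Finset (Fin n)))),
      (∀ b ∈ B, b.card = k) ∧
      (∀ s : Finset (Fin n), s.card = 2 → ∃! b, b ∈ B ∧ s ⊆ b) ∧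
      (∀ c ∈ P, c ⊆ B) ∧
      (∀ c ∈ P, ∀ x : Fin n, ∃! b, b ∈ c ∧ x ∈ b) ∧
      (∀ b ∈ B, ∃! c, c ∈ P ∧ b ∈ c)) :
    ∃ C : Set ((Fin ((k - 1) * n) → ZMod 2) × ZMod (n + 1)),
      (∀ c ∈ C, hammingNorm c.1 + (if c.2 = 0 then 0 else 1) = k) ∧
      (∀ x : (Fin ((k - 1) * n) → ZMod 2) × ZMod (n + 1),
        hammingNorm x.1 + (if x.2 = 0 then 0 else 1) = 2 →
        ∃! c, c ∈ C ∧ hammingDist x.1 c.1 + (if x.2 = c.2 then 0 else 1) = k - 2) ∧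
      (∀ c₁ ∈ C, ∀ c₂ ∈ C, c₁ ≠ c₂ →
        2 * (k - 2) + 1 ≤ hammingDist c₁.1 c₂.1 + (if c₁.2 = c₂.2 then 0 else 1)) := by
  obtain ⟨A, hA⟩ := hOA
  obtain ⟨B, -, hBk, hB₂, -⟩ := hRes
  obtain ⟨L, hL⟩ := MixedSteiner.exists_labelling (B := (B : Set (Finset (Fin n)))) hBk hB₂
  exact MixedSteiner.exists_isMixedSteinerSystem hk (by simp) (by simp) hA hL
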